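/- arXiv:1411.0522 — 4 statements merged into one kernel-verified Lean document; each statement's English description precedes it below -/
import Mathlib

section
/- If a graph G admits a strong immersion θ of K_n with branch set W = θ(V(K_n)) ⊆ X_t for some node t of a tree-cut decomposition (T,X) of G, then the torso H of (G,T,X) at t also contains K_n as a strong immersion. -/
open scoped Classical

/-- A multigraph: possibly parallel edges and loops, given by source/target maps
(the orientation is irrelevant; walks may traverse edges in either direction). -/
structure Multigraph (V : Type*) (E : Type*) where
  src : E → V
  tgt : E → V

namespace Multigraph

variable {V E V' E' : Type*}

/-- Walks in a multigraph, traversing edges in either direction. -/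
inductive Walk (G : Multigraph V E) : V → V → Type _
  | nil (v : V) : Walk G v v
  | cons {u v w : V} (e : E) (hs : G.src e = u) (ht : G.tgt e = v) (p : Walk G v w) : Walk G u w
  | cons' {u v w : V} (e : E) (hs : G.src e = v) (ht : G.tgt e = u) (p : Walk G v w) : Walk G u w

def Walk.edges {G : Multigraph V E} : ∀ {u v : V}, G.Walk u v → List E
  | _, _, .nil _ => []
  | _, _, .cons e _ _ p => e :: p.edges
  | _, _, .cons' e _ _ p => e :: p.edges

def Walk.support {G : Multigraph V E} : ∀ {u v : V}, G.Walk u v → List V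
  | u, _, .nil _ => [u]
  | u, _, .cons _ _ _ p => u :: p.support
  | u, _, .cons' _ _ _ p => u :: p.support

/-- An edge is incident with a vertex. -/
def Inc (G : Multigraph V E) (e : E) (v : V) : Prop := G.src e = v ∨ G.tgt e = v

/-- The end of an edge other than `v`. -/
noncomputable def otherEnd (G : Multigraph V E) (v : V) (e : E) : V :=
  if G.src e = v then G.tgt e else G.src e

lemma otherEnd_ne (G : Multigraph V E) {v : V} {e : E} (hinc : G.Inc e v)
    (hnl : ¬ (G.src e = v ∧ G.tgt e = v)) : G.otherEnd v e ≠ v := by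
  unfold otherEnd
  split_ifs with h
  · exact fun ht => hnl ⟨h, ht⟩
  · exact fun hs => (hinc.elim h (fun ht => h (by
      exact absurd hs (fun hs' => h hs')))) |>.elim
  
/-- Degree of a vertex (each loop counts twice). -/
noncomputable def degree (G : Multigraph V E) (v : V) : ℕ :=
  Set.ncard {e | G.src e = v} + Set.ncard {e | G.tgt e = v}

/-- The edge cut determined by a vertex set `S`: edges with exactly one end in `S`. -/
def cutEdges (G : Multigraph V E) (S : Set V) : Set E :=
  {e | (G.src e ∈ S ∧ G.tgt e ∉ S) ∨ (G.src e ∉ S ∧ G.tgt e ∈ S)}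

/-- A set `W` is `k`-edge-connected in `G`: no edge cut of size `< k` separates
two vertices of `W`. -/
def EdgeConnSet (G : Multigraph V E) (k : ℕ) (W : Set V) : Prop :=
  ∀ S : Set V, (G.cutEdges S).ncard < k → ∀ x ∈ W, ∀ y ∈ W, (x ∈ S ↔ y ∈ S)

/-- There exist `k` pairwise edge-disjoint paths (trails) from `u` to `v`. -/
def EDWalks (G : Multigraph V E) (u v : V) (k : ℕ) : Prop :=
  ∃ P : Fin k → G.Walk u v, (∀ i, (P i).edges.Nodup) ∧
    ∀ i j, i ≠ j → ∀ e ∈ (P i).edges, e ∉ (P j).edges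

/-- The neighbourhood of `v`: vertices other than `v` joined to `v` by an edge. -/
def nbhd (G : Multigraph V E) (v : V) : Set V :=
  {u | u ≠ v ∧ ∃ e, (G.src e = v ∧ G.tgt e = u) ∨ (G.src e = u ∧ G.tgt e = v)}

/-- A strong immersion of `H` in `G`. -/
structure StrongImm (H : Multigraph V' E') (G : Multigraph V E) where
  vmap : V' → V
  vinj : Function.Injective vmap
  path : ∀ e : E', G.Walk (vmap (H.src e)) (vmap (H.tgt e))
  edges_nodup : ∀ e, (path e).edges.Nodup
  edisj : ∀ e f, e ≠ f → ∀ x ∈ (path e).edges, x ∉ (path f).edges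
  avoid : ∀ (e : E') (u : V'), u ≠ H.src e → u ≠ H.tgt e → vmap u ∉ (path e).support

def StrongImmersion (H : Multigraph V' E') (G : Multigraph V E) : Prop :=
  Nonempty (StrongImm H G)

/-- A weak immersion of `H` in `G`. -/
structure WeakImm (H : Multigraph V' E') (G : Multigraph V E) where
  vmap : V' → V
  vinj : Function.Injective vmap
  path : ∀ e : E', G.Walk (vmap (H.src e)) (vmap (H.tgt e))
  edges_nodup : ∀ e, (path e).edges.Nodup
  edisj : ∀ e f, e ≠ f → ∀ x ∈ (path e).edges, x ∉ (path f).edges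

def WeakImmersion (H : Multigraph V' E') (G : Multigraph V E) : Prop :=
  Nonempty (WeakImm H G)

/-- The complete graph `K n` as a multigraph. -/
def completeMG (n : ℕ) : Multigraph (Fin n) {p : Fin n × Fin n // p.1 < p.2} :=
  ⟨fun p => p.1.1, fun p => p.1.2⟩

/-- A path-like decomposition of the part of `G` induced on `S`, with respect to
an ordered set `X ⊆ S`: an ordering of `X` and a near-partition of `S \ X` into bags. -/
structure PathLikeDecomp (G : Multigraph V E) (S : Set V) (X : Set V) where
  t : ℕ
  ord : Fin t → V
  ord_inj : Function.Injective ord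
  ord_range : Set.range ord = X
  bag : Fin (t + 1) → Set V
  bag_disj : ∀ i j, i ≠ j → Disjoint (bag i) (bag j)
  bag_union : (⋃ i, bag i) = S \ X

namespace PathLikeDecomp

variable {G : Multigraph V E} {S X : Set V} (P : PathLikeDecomp G S X)

/-- Vertices strictly to the left of the `i`-th ordered vertex. -/
def leftSet (i : Fin P.t) : Set V :=
  {v | ∃ j, j < i ∧ v = P.ord j} ∪ ⋃ (j : Fin (P.t + 1)) (_ : (j : ℕ) ≤ (i : ℕ)), P.bag j

/-- Vertices strictly to the right of the `i`-th ordered vertex. -/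
def rightSet (i : Fin P.t) : Set V :=
  {v | ∃ j, i < j ∧ v = P.ord j} ∪ ⋃ (j : Fin (P.t + 1)) (_ : (i : ℕ) < (j : ℕ)), P.bag j

/-- The `x_i`-cut of the decomposition. -/
def cutAt (i : Fin P.t) : Set E :=
  {e | (G.src e ∈ P.leftSet i ∧ G.tgt e ∈ P.rightSet i) ∨
       (G.src e ∈ P.rightSet i ∧ G.tgt e ∈ P.leftSet i)}

/-- The decomposition has width less than `w`. -/
def WidthLt (w : ℕ) : Prop := ∀ i, (P.cutAt i).ncard < w

/-- A set `Z` is `p`-bounded in the decomposition. -/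
def Bounded (p : ℕ) (Z : Set V) : Prop :=
  (X ∩ Z).ncard + Set.ncard {j : Fin (P.t + 1) | (P.bag j ∩ Z).Nonempty} ≤ p

end PathLikeDecomp

/-- `W` is `(a,w,p)`-linear in `G`. -/
def Linear (G : Multigraph V E) (W : Set V) (a w p : ℕ) : Prop :=
  ∃ A : Set V, A ⊆ W ∧ A.ncard ≤ a ∧
    ∃ P : PathLikeDecomp G {v | v ∉ A} (W \ A), P.WidthLt w ∧
      ∀ v ∈ A, P.Bounded p (G.nbhd v)

/-- A graph is `α`-basic if the set of its vertices of degree at least `α` is `α`-linear. -/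
def Basic (G : Multigraph V E) (α : ℕ) : Prop :=
  Linear G {v | α ≤ G.degree v} α α α

/-- A tree-cut decomposition of `G` indexed by a tree on `τ`. -/
structure TreeCutDecomp (G : Multigraph V E) (τ : Type*) where
  tree : SimpleGraph τ
  tree_isTree : tree.IsTree
  bag : τ → Set V
  bag_disj : ∀ i j, i ≠ j → Disjoint (bag i) (bag j)
  bag_union : (⋃ i, bag i) = Set.univ

namespace TreeCutDecomp

variable {τ : Type*} {G : Multigraph V E} (D : TreeCutDecomp G τ)

/-- The union of the bags on the `v`-side of the tree edge `uv`. -/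
def sideVerts (u v : τ) : Set V :=
  ⋃ (x : τ) (_ : (D.tree.deleteEdges {s(u, v)}).Reachable v x), D.bag x

/-- The edge cut of `G` determined by the tree edge `uv`. -/
def edgeCut (u v : τ) : Set E := G.cutEdges (D.sideVerts u v)

/-- The adhesion of the decomposition. -/
noncomputable def adhesion : ℕ :=
  sSup {n | ∃ u v, D.tree.Adj u v ∧ n = (D.edgeCut u v).ncard}

/-- The decomposition has adhesion less than `α`. -/
def AdhesionLt (α : ℕ) : Prop := ∀ u v, D.tree.Adj u v → (D.edgeCut u v).ncard < α

lemma exists_bag (v : V) : ∃ t, v ∈ D.bag t :=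
  Set.mem_iUnion.mp (D.bag_union.symm ▸ Set.mem_univ v)

/-- The tree node whose bag contains `v`. -/
noncomputable def nodeOf (v : V) : τ := (D.exists_bag v).choose

lemma nodeOf_mem (v : V) : v ∈ D.bag (D.nodeOf v) := (D.exists_bag v).choose_spec

/-- Connected components of the tree with node `t` removed. -/
def PeriphComp (t : τ) := (D.tree.induce {x : τ | x ≠ t}).ConnectedComponent

/-- Vertices of the torso at `t`: core vertices and peripheral vertices. -/
def TorsoV (t : τ) := {v : V // v ∈ D.bag t} ⊕ D.PeriphComp t

/-- The consolidation map onto the torso at `t`. -/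
noncomputable def torsoProj (t : τ) (v : V) : D.TorsoV t :=
  if h : v ∈ D.bag t then Sum.inl ⟨v, h⟩
  else Sum.inr ((D.tree.induce {x : τ | x ≠ t}).connectedComponentMk
    ⟨D.nodeOf v, fun he => h (he ▸ D.nodeOf_mem v)⟩)

/-- Edges of the torso at `t`: all edges except the loops created by consolidation. -/
def TorsoE (t : τ) :=
  {e : E // ∀ c : D.PeriphComp t,
    ¬ (D.torsoProj t (G.src e) = Sum.inr c ∧ D.torsoProj t (G.tgt e) = Sum.inr c)}

/-- The torso of the tree-cut decomposition at `t`. -/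
noncomputable def torso (t : τ) : Multigraph (D.TorsoV t) (D.TorsoE t) :=
  ⟨fun e => D.torsoProj t (G.src e.1), fun e => D.torsoProj t (G.tgt e.1)⟩

end TreeCutDecomp

/-- A witness that `G` is a `k`-edge sum of `G₁` and `G₂`. -/
structure EdgeSumWitness (G : Multigraph V E) {V₁ E₁ V₂ E₂ : Type*}
    (G₁ : Multigraph V₁ E₁) (G₂ : Multigraph V₂ E₂) (k : ℕ) where
  v₁ : V₁
  v₂ : V₂
  noloop₁ : ∀ e, ¬ (G₁.src e = v₁ ∧ G₁.tgt e = v₁)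
  noloop₂ : ∀ e, ¬ (G₂.src e = v₂ ∧ G₂.tgt e = v₂)
  deg₁ : G₁.degree v₁ = k
  deg₂ : G₂.degree v₂ = k
  π : {e : E₁ // G₁.Inc e v₁} ≃ {e : E₂ // G₂.Inc e v₂}
  φ : V ≃ ({x : V₁ // x ≠ v₁} ⊕ {x : V₂ // x ≠ v₂})
  ψ : E ≃ ({e : E₁ // ¬ G₁.Inc e v₁} ⊕ {e : E₂ // ¬ G₂.Inc e v₂} ⊕ {e : E₁ // G₁.Inc e v₁})
  ends₁ : ∀ (e : E) (e₁ : {e : E₁ // ¬ G₁.Inc e v₁}), ψ e = Sum.inl e₁ →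
    s(G.src e, G.tgt e) =
      s(φ.symm (Sum.inl ⟨G₁.src e₁.1, fun h => e₁.2 (Or.inl h)⟩),
        φ.symm (Sum.inl ⟨G₁.tgt e₁.1, fun h => e₁.2 (Or.inr h)⟩))
  ends₂ : ∀ (e : E) (e₂ : {e : E₂ // ¬ G₂.Inc e v₂}), ψ e = Sum.inr (Sum.inl e₂) →
    s(G.src e, G.tgt e) =
      s(φ.symm (Sum.inr ⟨G₂.src e₂.1, fun h => e₂.2 (Or.inl h)⟩),
        φ.symm (Sum.inr ⟨G₂.tgt e₂.1, fun h => e₂.2 (Or.inr h)⟩))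
  ends_cross : ∀ (e : E) (e₁ : {e : E₁ // G₁.Inc e v₁}), ψ e = Sum.inr (Sum.inr e₁) →
    s(G.src e, G.tgt e) =
      s(φ.symm (Sum.inl ⟨G₁.otherEnd v₁ e₁.1, G₁.otherEnd_ne e₁.2 (noloop₁ e₁.1)⟩),
        φ.symm (Sum.inr ⟨G₂.otherEnd v₂ (π e₁).1, G₂.otherEnd_ne (π e₁).2 (noloop₂ (π e₁).1)⟩))

/-- `G` is a `k`-edge sum of `G₁` and `G₂`. -/
def IsEdgeSum (G : Multigraph V E) {V₁ E₁ V₂ E₂ : Type*}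
    (G₁ : Multigraph V₁ E₁) (G₂ : Multigraph V₂ E₂) (k : ℕ) : Prop :=
  Nonempty (EdgeSumWitness G G₁ G₂ k)

/-- A witness of an edge sum is grounded. -/
def EdgeSumWitness.Grounded {V₁ E₁ V₂ E₂ : Type*} {G : Multigraph V E}
    {G₁ : Multigraph V₁ E₁} {G₂ : Multigraph V₂ E₂} {k : ℕ}
    (wit : EdgeSumWitness G G₁ G₂ k) : Prop :=
  (∃ v₁' : V₁, v₁' ≠ wit.v₁ ∧ G₁.EDWalks wit.v₁ v₁' k) ∧
  (∃ v₂' : V₂, v₂' ≠ wit.v₂ ∧ G₂.EDWalks wit.v₂ v₂' k)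

/-- The graph obtained from `G` by consolidating the set `S` to a single vertex. -/
noncomputable def consolidate (G : Multigraph V E) (S : Set V) :
    Multigraph ({v : V // v ∉ S} ⊕ Unit) {e : E // ¬ (G.src e ∈ S ∧ G.tgt e ∈ S)} where
  src := fun e => if h : G.src e.1 ∈ S then Sum.inr () else Sum.inl ⟨G.src e.1, h⟩
  tgt := fun e => if h : G.tgt e.1 ∈ S then Sum.inr () else Sum.inl ⟨G.tgt e.1, h⟩

/-- The auxiliary adjacency: `m` pairwise edge-disjoint `x`–`y` paths avoiding `W ∖ {x,y}`. -/
def auxAdj (G : Multigraph V E) (W : Set V) (m : ℕ) (x y : V) : Prop :=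
  x ∈ W ∧ y ∈ W ∧ ∃ P : Fin m → G.Walk x y, (∀ i, (P i).edges.Nodup) ∧
    (∀ i j, i ≠ j → ∀ e ∈ (P i).edges, e ∉ (P j).edges) ∧
    (∀ i, ∀ v ∈ (P i).support, v ∈ W → v = x ∨ v = y)

/-- The auxiliary simple graph `G(m, W)`. -/
def auxGraph (G : Multigraph V E) (W : Set V) (m : ℕ) : SimpleGraph V where
  Adj x y := x ≠ y ∧ (G.auxAdj W m x y ∨ G.auxAdj W m y x)
  symm := ⟨fun x y h => ⟨h.1.symm, h.2.symm⟩⟩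
  loopless := ⟨fun x h => h.1 rfl⟩

end Multigraph

/-- `H` contains `K_{1,k}` as a minor: a centre branch set joined to `k` pairwise
disjoint branch sets, all inducing connected subgraphs. -/
def SimpleGraph.HasStarMinor {V : Type*} (H : SimpleGraph V) (k : ℕ) : Prop :=
  ∃ C : Fin (k + 1) → Set V, (∀ i, (C i).Nonempty) ∧
    (∀ i, (H.induce (C i)).Connected) ∧
    (∀ i j, i ≠ j → Disjoint (C i) (C j)) ∧
    (∀ i, i ≠ 0 → ∃ u ∈ C 0, ∃ v ∈ C i, H.Adj u v)

/-!
The torso at `t` is the image of `G` under the consolidation map, with the edges that become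
loops deleted. Mapping each path of the immersion edge by edge (and skipping the edges that
become loops) gives walks in the torso whose edges are a sublist of the original ones, so they
remain trails and pairwise edge-disjoint. Branch vertices lie in `X_t`, where consolidation is
injective and no other vertex is sent to them, so the mapped walks still avoid the other branch
vertices.
-/

namespace Multigraph

variable {V E V' : Type*}

def Walk.copy {G : Multigraph V E} {u v u' v' : V} (p : G.Walk u v) (hu : u = u') (hv : v = v') :
    G.Walk u' v' := hu ▸ hv ▸ p

@[simp]
lemma Walk.edges_copy {G : Multigraph V E} {u v u' v' : V} (p : G.Walk u v) (hu : u = u')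
    (hv : v = v') : (p.copy hu hv).edges = p.edges := by
  subst hu hv; rfl

@[simp]
lemma Walk.support_copy {G : Multigraph V E} {u v u' v' : V} (p : G.Walk u v) (hu : u = u')
    (hv : v = v') : (p.copy hu hv).support = p.support := by
  subst hu hv; rfl

def contract (G : Multigraph V E) (f : V → V') (keep : E → Prop) :
    Multigraph V' {e : E // keep e} :=
  ⟨fun e => f (G.src e.1), fun e => f (G.tgt e.1)⟩

section Contract

variable {G : Multigraph V E} {f : V → V'} {keep : E → Prop}
  (hloop : ∀ e, ¬ keep e → f (G.src e) = f (G.tgt e))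

/-- Edges that are not kept are skipped: `f` identifies their ends. -/
noncomputable def Walk.contract : ∀ {u v : V}, G.Walk u v → (G.contract f keep).Walk (f u) (f v)
  | _, _, .nil u => .nil (f u)
  | _, _, .cons e hs ht p =>
    if h : keep e then .cons ⟨e, h⟩ (congrArg f hs) (congrArg f ht) (p.contract)
    else p.contract.copy (hs ▸ ht ▸ (hloop e h).symm) rfl
  | _, _, .cons' e hs ht p =>
    if h : keep e then .cons' ⟨e, h⟩ (congrArg f hs) (congrArg f ht) (p.contract)
    else p.contract.copy (hs ▸ ht ▸ hloop e h) rfl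

lemma Walk.edges_contract_sublist {u v : V} (p : G.Walk u v) :
    ((p.contract hloop).edges.map Subtype.val).Sublist p.edges := by
  induction p with
  | nil => exact List.Sublist.slnil
  | cons e _ _ p ih | cons' e _ _ p ih =>
    rw [Walk.contract]
    split_ifs
    · exact ih.cons_cons e
    · rw [Walk.edges_copy]
      exact ih.cons e

lemma Walk.support_contract_sublist {u v : V} (p : G.Walk u v) :
    (p.contract hloop).support.Sublist (p.support.map f) := by
  induction p with
  | nil => exact List.Sublist.refl _
  | cons e _ _ p ih | cons' e _ _ p ih =>
    rw [Walk.contract]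
    split_ifs
    · exact ih.cons_cons _
    · rw [Walk.support_copy]
      exact ih.cons _

noncomputable def StrongImm.contract {V'' E'' : Type*} {H : Multigraph V'' E''}
    (θ : StrongImm H G) (hbranch : ∀ x u, f x = f (θ.vmap u) → x = θ.vmap u) :
    StrongImm H (G.contract f keep) where
  vmap u := f (θ.vmap u)
  vinj u w h := θ.vinj (hbranch _ w h)
  path e := (θ.path e).contract hloop
  edges_nodup e :=
    (((θ.path e).edges_contract_sublist hloop).nodup (θ.edges_nodup e)).of_map _
  edisj e e' hee' x hx hx' :=
    θ.edisj e e' hee' x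
      (((θ.path e).edges_contract_sublist hloop).mem (List.mem_map_of_mem hx))
      (((θ.path e').edges_contract_sublist hloop).mem (List.mem_map_of_mem hx'))
  avoid e u hus hut hu := by
    obtain ⟨y, hy, hfy⟩ :=
      List.mem_map.mp (((θ.path e).support_contract_sublist hloop).mem hu)
    exact θ.avoid e u hus hut (hbranch y u hfy ▸ hy)

end Contract

namespace TreeCutDecomp

variable {τ : Type*} {G : Multigraph V E} (D : TreeCutDecomp G τ) (t : τ)

lemma torsoProj_of_mem {v : V} (h : v ∈ D.bag t) : D.torsoProj t v = Sum.inl ⟨v, h⟩ :=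
  dif_pos h

lemma eq_of_torsoProj_eq_of_mem {x v : V} (hv : v ∈ D.bag t)
    (h : D.torsoProj t x = D.torsoProj t v) : x = v := by
  by_cases hx : x ∈ D.bag t
  · rw [D.torsoProj_of_mem t hx, D.torsoProj_of_mem t hv] at h
    exact congrArg Subtype.val (Sum.inl.inj h)
  · simp [torsoProj, hx, hv] at h

lemma torsoProj_src_eq_tgt_of_not_torsoE (e : E)
    (he : ¬ ∀ c : D.PeriphComp t,
      ¬ (D.torsoProj t (G.src e) = Sum.inr c ∧ D.torsoProj t (G.tgt e) = Sum.inr c)) :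
    D.torsoProj t (G.src e) = D.torsoProj t (G.tgt e) := by
  obtain ⟨c, hs, ht⟩ := not_forall_not.mp he
  rw [hs, ht]

end TreeCutDecomp

end Multigraph

/-- if `G` admits a strong immersion of `K_n` whose branch set lies in the
bag `X_t` of a tree-cut decomposition, then the torso at `t` also strongly immerses `K_n`. -/
theorem torso_clique_immersion {V E : Type*} {τ : Type*} (G : Multigraph V E) (n : ℕ)
    (θ : Multigraph.StrongImm (Multigraph.completeMG n) G)
    (D : Multigraph.TreeCutDecomp G τ) (t : τ) (hW : Set.range θ.vmap ⊆ D.bag t) :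
    Multigraph.StrongImmersion (Multigraph.completeMG n) (D.torso t) :=
  ⟨θ.contract (D.torsoProj_src_eq_tgt_of_not_torsoE t)
    fun _ u h => D.eq_of_torsoProj_eq_of_mem t (hW ⟨u, rfl⟩) h⟩
end

section
/- Submodularity-style exchange for minimal separators: Let G be a graph, A ⊆ V(G), and x₁,...,x_t an ordering of some vertices of G−A. For 2 ≤ i ≤ t−1, call Z ⊆ V(G)∖A an i-separator if x_i ∉ Z, {x₁,...,x_{i−1}} ⊆ Z, and {x_{i+1},...,x_t} ∩ Z = ∅; let s_i(Z) be the number of edges of G−A with one end in Z and the other in V(G−A)∖(Z∪{x_i}). For each i, let L_i be an i-separator minimizing s_i(L_i) and, subject to that, minimizing |L_i|. Then for all 2 ≤ i < j ≤ t−1 we have L_i ⊊ L_j. -/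
open scoped Classical

namespace Multigraph

/-- `Z` is an `i`-separator (with respect to `A` and the ordering `x₁, …, x_t`). -/
def ISep {V E : Type*} (_G : Multigraph V E) (A : Set V) (x : ℕ → V) (t i : ℕ)
    (Z : Set V) : Prop :=
  (∀ v ∈ Z, v ∉ A) ∧ x i ∉ Z ∧ (∀ j, 1 ≤ j → j < i → x j ∈ Z) ∧
    (∀ j, i < j → j ≤ t → x j ∉ Z)

/-- `s_i(Z)`: the number of edges of `G − A` with one end in `Z` and the other end in
`V(G−A) ∖ (Z ∪ {x_i})`. -/
noncomputable def sepCount {V E : Type*} (G : Multigraph V E) (A : Set V) (x : ℕ → V)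
    (i : ℕ) (Z : Set V) : ℕ :=
  Set.ncard {e : E | G.src e ∉ A ∧ G.tgt e ∉ A ∧
    ((G.src e ∈ Z ∧ G.tgt e ∉ Z ∧ G.tgt e ≠ x i) ∨
     (G.tgt e ∈ Z ∧ G.src e ∉ Z ∧ G.src e ≠ x i))}

end Multigraph


/-!
Uncrossing. For `i < j` put `P = L_i` and `Q = L_j`. Since `x_j ∉ P` and `x_i ∈ Q`, every edge
is counted at least as often by `s_i(P) + s_j(Q)` as by `s_i(P ∩ Q) + s_j(P ∪ Q)`, while
`P ∩ Q` is an `i`-separator and `P ∪ Q` a `j`-separator. Minimality of `Q` gives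
`s_j(Q) ≤ s_j(P ∪ Q)`, hence `s_i(P ∩ Q) ≤ s_i(P)`, and the tie-break on `|P|` forces
`P ∩ Q = P`. Finally `x_i ∈ Q \ P`, so the inclusion is strict.
-/

namespace Multigraph

variable {V E : Type*}

def sepEdges (G : Multigraph V E) (A : Set V) (a : V) (Z : Set V) : Set E :=
  {e : E | G.src e ∉ A ∧ G.tgt e ∉ A ∧
    ((G.src e ∈ Z ∧ G.tgt e ∉ Z ∧ G.tgt e ≠ a) ∨
     (G.tgt e ∈ Z ∧ G.src e ∉ Z ∧ G.src e ≠ a))}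

theorem sepCount_eq_ncard_sepEdges (G : Multigraph V E) (A : Set V) (x : ℕ → V) (i : ℕ)
    (Z : Set V) : G.sepCount A x i Z = (G.sepEdges A (x i) Z).ncard :=
  rfl

section Uncrossing

variable (G : Multigraph V E) (A : Set V) {P Q : Set V} {a b : V}

theorem sepEdges_inter_inter_sepEdges_union_subset :
    G.sepEdges A a (P ∩ Q) ∩ G.sepEdges A b (P ∪ Q) ⊆
      G.sepEdges A a P ∩ G.sepEdges A b Q := by
  rintro e ⟨⟨hs, ht, h₁⟩, -, -, h₂⟩
  refine ⟨⟨hs, ht, ?_⟩, hs, ht, ?_⟩ <;> grind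

theorem sepEdges_inter_union_sepEdges_union_subset (hbP : b ∉ P) (haQ : a ∈ Q) :
    G.sepEdges A a (P ∩ Q) ∪ G.sepEdges A b (P ∪ Q) ⊆
      G.sepEdges A a P ∪ G.sepEdges A b Q := by
  rintro e (⟨hs, ht, h⟩ | ⟨hs, ht, h⟩) <;>
  · by_cases hP : e ∈ G.sepEdges A a P
    · exact Or.inl hP
    · exact Or.inr ⟨hs, ht, by simp only [sepEdges, Set.mem_ofPred_eq] at hP; grind⟩

theorem ncard_sepEdges_inter_add_ncard_sepEdges_union_le [Finite E] (hbP : b ∉ P)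
    (haQ : a ∈ Q) :
    (G.sepEdges A a (P ∩ Q)).ncard + (G.sepEdges A b (P ∪ Q)).ncard ≤
      (G.sepEdges A a P).ncard + (G.sepEdges A b Q).ncard := by
  rw [← Set.ncard_union_add_ncard_inter, ← Set.ncard_union_add_ncard_inter (G.sepEdges A a P)]
  exact add_le_add
    (Set.ncard_le_ncard (G.sepEdges_inter_union_sepEdges_union_subset A hbP haQ))
    (Set.ncard_le_ncard (G.sepEdges_inter_inter_sepEdges_union_subset A))

end Uncrossing

section Separators

variable {G : Multigraph V E} {A : Set V} {x : ℕ → V} {t i j : ℕ} {P Q : Set V}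

theorem ISep.inter (hP : G.ISep A x t i P) (hQ : G.ISep A x t j Q) (hij : i ≤ j) :
    G.ISep A x t i (P ∩ Q) :=
  ⟨fun v hv => hP.1 v hv.1, fun h => hP.2.1 h.1,
    fun k hk hki => ⟨hP.2.2.1 k hk hki, hQ.2.2.1 k hk (by omega)⟩,
    fun k hik hkt h => hP.2.2.2 k hik hkt h.1⟩

theorem ISep.union (hP : G.ISep A x t i P) (hQ : G.ISep A x t j Q) (hij : i < j)
    (hjt : j ≤ t) : G.ISep A x t j (P ∪ Q) :=
  ⟨fun v hv => hv.elim (hP.1 v) (hQ.1 v), fun h => h.elim (hP.2.2.2 j hij hjt) hQ.2.1,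
    fun k hk hkj => Or.inr (hQ.2.2.1 k hk hkj),
    fun k hjk hkt h => h.elim (hP.2.2.2 k (by omega) hkt) (hQ.2.2.2 k hjk hkt)⟩

end Separators

end Multigraph

theorem minimal_separators_nested_general {V E : Type*} [Fintype V] [Fintype E]
    (G : Multigraph V E) (A : Set V) (x : ℕ → V) (t : ℕ)
    (L : ℕ → Set V)
    (hL : ∀ i, 2 ≤ i → i ≤ t - 1 →
      Multigraph.ISep G A x t i (L i) ∧
      ∀ Z, Multigraph.ISep G A x t i Z →
        Multigraph.sepCount G A x i (L i) ≤ Multigraph.sepCount G A x i Z ∧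
        (Multigraph.sepCount G A x i Z ≤ Multigraph.sepCount G A x i (L i) →
          (L i).ncard ≤ Z.ncard)) :
    ∀ i j, 2 ≤ i → i < j → j ≤ t - 1 → L i ⊂ L j := by
  intro i j hi hij hj
  obtain ⟨hLi, hLi_min⟩ := hL i hi (by omega)
  obtain ⟨hLj, hLj_min⟩ := hL j (by omega) hj
  have hxj : x j ∉ L i := hLi.2.2.2 j hij (by omega)
  have hxi : x i ∈ L j := hLj.2.2.1 i (by omega) hij
  have huncross := G.ncard_sepEdges_inter_add_ncard_sepEdges_union_le A hxj hxi
  obtain ⟨-, hcard⟩ := hLi_min _ (hLi.inter hLj hij.le)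
  have hunion := (hLj_min _ (hLi.union hLj hij (by omega))).1
  simp only [Multigraph.sepCount_eq_ncard_sepEdges] at hcard hunion
  have hLi_sub : L i ⊆ L j := Set.inter_eq_left.mp <|
    Set.eq_of_subset_of_ncard_le Set.inter_subset_left (hcard (by omega))
  exact hLi_sub.ssubset_of_ne fun h => hLi.2.1 (h ▸ hxi)

/-- minimal separators are strictly nested: `L_i ⊊ L_j` for `i < j`. -/
theorem minimal_separators_nested {V E : Type*} [Fintype V] [Fintype E]
    (G : Multigraph V E) (A : Set V) (x : ℕ → V) (t : ℕ)
    (hinj : Set.InjOn x (Set.Icc 1 t)) (hxA : ∀ j ∈ Set.Icc 1 t, x j ∉ A)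
    (L : ℕ → Set V)
    (hL : ∀ i, 2 ≤ i → i ≤ t - 1 →
      Multigraph.ISep G A x t i (L i) ∧
      ∀ Z, Multigraph.ISep G A x t i Z →
        Multigraph.sepCount G A x i (L i) ≤ Multigraph.sepCount G A x i Z ∧
        (Multigraph.sepCount G A x i Z ≤ Multigraph.sepCount G A x i (L i) →
          (L i).ncard ≤ Z.ncard)) :
    ∀ i j, 2 ≤ i → i < j → j ≤ t - 1 → L i ⊂ L j :=
  minimal_separators_nested_general G A x t L hL
end

section
/- Star immersion from an auxiliary-graph star: Let G be a graph, W ⊆ V(G), m an integer, and F a graph with |V(F)| ≥ 2 and m ≥ 2|E(F)|. If G(m,W) contains a subtree T with a non-leaf vertex c and leaf set Z with |Z| = |V(F)|, then G contains F as a strong immersion. (Hence the branch vertices of F can be taken in Z and all connecting paths routed through the hub c.) -/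
open scoped Classical

/-!
Label the leaves of `T` by `V(F)` and cut every edge of `F` into two half-edges, each hanging at
the leaf of its end. It suffices to join every half-edge to the hub `c` by a trail that meets no
leaf after its start, these `2|E(F)|` trails being pairwise edge-disjoint: the path of an edge
`uv` of `F` is then the trail of its `u`-half followed by the reversed trail of its `v`-half.

By Menger's theorem (max-flow min-cut for unit capacities) such trails exist once every vertex
set `S` with `c ∉ S` that contains a used leaf `z` is left by at least `m ≥ 2|E(F)|` edges that
do not enter a leaf. The tree path from `z` to `c` has no leaf besides `z`, so it leaves `S` along
an edge `xy` of `G(m, W)`. Each of the `m` edge-disjoint `x`–`y` walks leaves `S` by an edge not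
entering a leaf: leaves lie in `W`, so such a leaf would be `x` or `y`, hence `z ∈ S`.
-/

namespace Multigraph

variable {V E : Type*} {G : Multigraph V E}

/-- `(e, true)` traverses `e` from `src e` to `tgt e`, and `(e, false)` backwards. -/
def tailOf (G : Multigraph V E) (p : E × Bool) : V := bif p.2 then G.src p.1 else G.tgt p.1

def headOf (G : Multigraph V E) (p : E × Bool) : V := bif p.2 then G.tgt p.1 else G.src p.1

noncomputable def exitsAvoiding [Fintype E] (G : Multigraph V E) (S Z : Set V) :
    Finset (E × Bool) :=
  {p | G.tailOf p ∈ S ∧ G.headOf p ∉ S ∧ G.headOf p ∉ Z}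

namespace Walk

def append : ∀ {u v w : V}, G.Walk u v → G.Walk v w → G.Walk u w
  | _, _, _, .nil _, q => q
  | _, _, _, .cons e hs ht p, q => .cons e hs ht (p.append q)
  | _, _, _, .cons' e hs ht p, q => .cons' e hs ht (p.append q)

def reverse : ∀ {u v : V}, G.Walk u v → G.Walk v u
  | _, _, .nil v => .nil v
  | _, _, .cons e hs ht p => p.reverse.append (.cons' e hs ht (.nil _))
  | _, _, .cons' e hs ht p => p.reverse.append (.cons e hs ht (.nil _))

@[simp] lemma edges_append {u v w : V} (p : G.Walk u v) (q : G.Walk v w) :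
    (p.append q).edges = p.edges ++ q.edges := by
  induction p with
  | nil => rfl
  | cons e hs ht p ih => simp [append, edges, ih]
  | cons' e hs ht p ih => simp [append, edges, ih]

lemma support_append {u v w : V} (p : G.Walk u v) (q : G.Walk v w) :
    (p.append q).support = p.support ++ q.support.tail := by
  induction p with
  | nil => cases q <;> rfl
  | cons e hs ht p ih => simp [append, support, ih]
  | cons' e hs ht p ih => simp [append, support, ih]

lemma mem_support_append {u v w x : V} {p : G.Walk u v} {q : G.Walk v w}
    (hx : x ∈ (p.append q).support) : x ∈ p.support ∨ x ∈ q.support := by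
  rw [support_append, List.mem_append] at hx
  exact hx.imp id List.mem_of_mem_tail

@[simp] lemma edges_reverse {u v : V} (p : G.Walk u v) :
    p.reverse.edges = p.edges.reverse := by
  induction p with
  | nil => rfl
  | cons e hs ht p ih => simp [reverse, edges, ih]
  | cons' e hs ht p ih => simp [reverse, edges, ih]

@[simp] lemma support_reverse {u v : V} (p : G.Walk u v) :
    p.reverse.support = p.support.reverse := by
  induction p with
  | nil => rfl
  | cons e hs ht p ih => simp [reverse, support, support_append, ih]
  | cons' e hs ht p ih => simp [reverse, support, support_append, ih]

@[simp] lemma start_mem_support {u v : V} (p : G.Walk u v) : u ∈ p.support := by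
  cases p <;> simp [support]

lemma exists_crossing {u v : V} (p : G.Walk u v) {S : Set V} (hu : u ∈ S) (hv : v ∉ S) :
    ∃ q : E × Bool,
      q.1 ∈ p.edges ∧ G.tailOf q ∈ S ∧ G.headOf q ∉ S ∧ G.headOf q ∈ p.support := by
  induction p with
  | nil => exact absurd hu hv
  | @cons _ w _ e hs ht p ih | @cons' _ w _ e hs ht p ih =>
    by_cases hw : w ∈ S
    · obtain ⟨q, hq, hqS, hqS', hqp⟩ := ih hw hv
      exact ⟨q, List.mem_cons_of_mem _ hq, hqS, hqS', List.mem_cons_of_mem _ hqp⟩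
    · subst hs ht
      have hwp := p.start_mem_support
      first
        | exact ⟨(e, true), List.mem_cons_self, hu, hw, List.mem_cons_of_mem _ hwp⟩
        | exact ⟨(e, false), List.mem_cons_self, hu, hw, List.mem_cons_of_mem _ hwp⟩

end Walk

variable {W : Set V} {m : ℕ}

lemma auxAdj.symm {x y : V} (h : G.auxAdj W m x y) : G.auxAdj W m y x := by
  obtain ⟨hx, hy, P, hnodup, hdisj, hW⟩ := h
  refine ⟨hy, hx, fun i => (P i).reverse, fun i => ?_, fun i j hij e => ?_,
    fun i v hv hvW => ?_⟩
  · simpa using hnodup i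
  · simpa using hdisj i j hij e
  · rw [Walk.support_reverse, List.mem_reverse] at hv
    exact (hW i v hv hvW).symm

lemma auxAdj_of_auxGraph_adj {x y : V} (h : (G.auxGraph W m).Adj x y) : G.auxAdj W m x y :=
  h.2.elim id auxAdj.symm

end Multigraph

namespace SimpleGraph.Subgraph

variable {α : Type*} {Γ : SimpleGraph α} (T : Γ.Subgraph)

def leaves : Set α := {v | v ∈ T.verts ∧ (T.neighborSet v).ncard = 1}

variable {T}

lemma notMem_leaves_of_adj_of_adj {v a b : α} (hab : a ≠ b) (ha : T.Adj v a)
    (hb : T.Adj v b) : v ∉ T.leaves := by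
  rintro ⟨-, hv⟩
  obtain ⟨w, hw⟩ := Set.ncard_eq_one.mp hv
  have ha' : a ∈ T.neighborSet v := ha
  have hb' : b ∈ T.neighborSet v := hb
  rw [hw, Set.mem_singleton_iff] at ha' hb'
  exact hab (ha'.trans hb'.symm)

lemma notMem_leaves_of_mem_support {u v w : T.verts} {p : T.coe.Walk u v} (hp : p.IsPath)
    (hw : w ∈ p.support) (hwu : w ≠ u) (hwv : w ≠ v) : (w : α) ∉ T.leaves := by
  obtain ⟨n, rfl, hn⟩ := SimpleGraph.Walk.mem_support_iff_exists_getVert.mp hw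
  have hn0 : n ≠ 0 := by rintro rfl; simp at hwu
  have hnl : n ≠ p.length := by rintro rfl; simp at hwv
  have hprev := p.adj_getVert_succ (i := n - 1) (by omega)
  have hnext := p.adj_getVert_succ (i := n) (by omega)
  rw [Nat.sub_add_cancel (Nat.one_le_iff_ne_zero.mpr hn0)] at hprev
  refine notMem_leaves_of_adj_of_adj (a := p.getVert (n - 1)) (b := p.getVert (n + 1))
    (fun h => ?_) hprev.symm hnext
  have := hp.getVert_injOn (by simp; omega) (by simp; omega) (Subtype.ext h)
  omega

/-- Internal vertices of the `T`-path from `z` to `c` have two neighbours, so `z` is its only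
leaf. -/
lemma exists_adj_mem_notMem_of_connected (hT : T.coe.Connected) {z c : α} (hz : z ∈ T.verts)
    (hc : c ∈ T.verts) (hcl : c ∉ T.leaves) {S : Set α} (hzS : z ∈ S) (hcS : c ∉ S) :
    ∃ x y, T.Adj x y ∧ x ∈ S ∧ y ∉ S ∧
      ∀ v, (v = x ∨ v = y) → v ∈ T.leaves → v = z := by
  let p := (hT.preconnected ⟨z, hz⟩ ⟨c, hc⟩).some.toPath
  have hleaf : ∀ w ∈ p.1.support, (w : α) ∈ T.leaves → (w : α) = z := by
    intro w hw hwl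
    by_cases hwz : w = ⟨z, hz⟩
    · rw [hwz]
    by_cases hwc : w = ⟨c, hc⟩
    · subst hwc
      exact absurd hwl hcl
    exact absurd hwl (notMem_leaves_of_mem_support p.2 hw hwz hwc)
  obtain ⟨d, hd, hdS, hdS'⟩ := p.1.exists_boundary_dart {w | (w : α) ∈ S} hzS hcS
  refine ⟨d.fst, d.snd, (coe_adj _ _ _).mp d.adj, hdS, hdS', ?_⟩
  rintro v (rfl | rfl)
  · exact hleaf _ (p.1.dart_fst_mem_support_of_mem_darts hd)
  · exact hleaf _ (p.1.dart_snd_mem_support_of_mem_darts hd)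

end SimpleGraph.Subgraph

open scoped Finset

namespace UnitFlow

variable {A N : Type*}

inductive DWalk (tl hd : A → N) : N → N → Type _
  | nil (v : N) : DWalk tl hd v v
  | cons {u v w : N} (a : A) (h₁ : tl a = u) (h₂ : hd a = v) (p : DWalk tl hd v w) :
      DWalk tl hd u w

namespace DWalk

variable {tl hd : A → N}

def arcs : ∀ {u v : N}, DWalk tl hd u v → List A
  | _, _, .nil _ => []
  | _, _, .cons a _ _ p => a :: p.arcs

def append : ∀ {u v w : N}, DWalk tl hd u v → DWalk tl hd v w → DWalk tl hd u w
  | _, _, _, .nil _, q => q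
  | _, _, _, .cons a h₁ h₂ p, q => .cons a h₁ h₂ (p.append q)

def snoc {u v : N} (p : DWalk tl hd u v) (a : A) (h : tl a = v) : DWalk tl hd u (hd a) :=
  p.append (.cons a h rfl (.nil _))

@[simp] lemma arcs_append {u v w : N} (p : DWalk tl hd u v) (q : DWalk tl hd v w) :
    (p.append q).arcs = p.arcs ++ q.arcs := by
  induction p with
  | nil => rfl
  | cons a h₁ h₂ p ih => simp [append, arcs, ih]

@[simp] lemma arcs_snoc {u v : N} (p : DWalk tl hd u v) (a : A) (h : tl a = v) :
    (p.snoc a h).arcs = p.arcs ++ [a] := by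
  simp [snoc, arcs]

lemma exists_suffix_of_mem {u v : N} (p : DWalk tl hd u v) (hp : p.arcs.Nodup) {a : A}
    (ha : a ∈ p.arcs) :
    ∃ q : DWalk tl hd (hd a) v,
      (∀ x ∈ q.arcs, x ∈ p.arcs) ∧ a ∉ q.arcs ∧ q.arcs.Nodup := by
  induction p with
  | nil => simp [arcs] at ha
  | cons a' h₁ h₂ p ih =>
    simp only [arcs, List.nodup_cons, List.mem_cons] at hp ha
    rcases ha with rfl | ha
    · subst h₂
      exact ⟨p, fun x hx => List.mem_cons_of_mem _ hx, hp.1, hp.2⟩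
    · obtain ⟨q, hq, haq, hqnd⟩ := ih hp.2 ha
      exact ⟨q, fun x hx => List.mem_cons_of_mem _ (hq x hx), haq, hqnd⟩

lemma exists_nodup {u v : N} (p : DWalk tl hd u v) :
    ∃ q : DWalk tl hd u v, (∀ x ∈ q.arcs, x ∈ p.arcs) ∧ q.arcs.Nodup := by
  induction p with
  | nil w => exact ⟨.nil w, by simp [arcs], by simp [arcs]⟩
  | cons a h₁ h₂ p ih =>
    obtain ⟨q, hqp, hq⟩ := ih
    by_cases ha : a ∈ q.arcs
    · obtain ⟨r, hrq, har, hr⟩ := q.exists_suffix_of_mem hq ha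
      refine ⟨.cons a h₁ rfl r, ?_, List.nodup_cons.mpr ⟨har, hr⟩⟩
      simp only [arcs, List.mem_cons, forall_eq_or_imp, true_or, true_and]
      exact fun x hx => Or.inr (hqp x (hrq x hx))
    · refine ⟨.cons a h₁ h₂ q, ?_, List.nodup_cons.mpr ⟨ha, hq⟩⟩
      simp only [arcs, List.mem_cons, forall_eq_or_imp, true_or, true_and]
      exact fun x hx => Or.inr (hqp x hx)

end DWalk

variable (tl hd : A → N)

/-- A 0/1-flow is a map `f : A → Bool` marking the used arcs. Its residual arcs: `(a, false)`
runs along an unused arc `a`, `(a, true)` against a used one. -/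
abbrev ResArc (f : A → Bool) := {p : A × Bool // f p.1 = p.2}

def resTl (f : A → Bool) (p : ResArc f) : N := bif p.1.2 then hd p.1.1 else tl p.1.1

def resHd (f : A → Bool) (p : ResArc f) : N := bif p.1.2 then tl p.1.1 else hd p.1.1

def Reach (f : A → Bool) (u v : N) : Prop := Nonempty (DWalk (resTl tl hd f) (resHd tl hd f) u v)

variable {tl hd}

lemma Reach.snoc_unused {f : A → Bool} {s : N} {a : A} (h : Reach tl hd f s (tl a))
    (ha : f a = false) : Reach tl hd f s (hd a) :=
  ⟨h.some.snoc ⟨(a, false), ha⟩ rfl⟩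

lemma Reach.snoc_used {f : A → Bool} {s : N} {a : A} (h : Reach tl hd f s (hd a))
    (ha : f a = true) : Reach tl hd f s (tl a) :=
  ⟨h.some.snoc ⟨(a, true), ha⟩ rfl⟩

lemma ResArc.nodup_map_fst {f : A → Bool} {l : List (ResArc f)} (hl : l.Nodup) :
    (l.map (·.1.1)).Nodup :=
  hl.map_on fun x _ y _ hxy => Subtype.ext (Prod.ext hxy (x.2.symm.trans (hxy ▸ y.2)))

noncomputable def flipAlong (l : List A) (f : A → Bool) : A → Bool :=
  fun a => if a ∈ l then !f a else f a

@[simp] lemma flipAlong_nil (f : A → Bool) : flipAlong [] f = f := by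
  funext a; simp [flipAlong]

lemma flipAlong_cons (f : A → Bool) {a : A} {l : List A} (ha : a ∉ l) :
    flipAlong (a :: l) f = Function.update (flipAlong l f) a (!f a) := by
  funext x
  by_cases hx : x = a
  · subst hx; simp [flipAlong, ha]
  · simp [flipAlong, hx]

variable (tl hd) [Fintype A] [DecidableEq N]

noncomputable def arcNetOut (b : Bool) (a : A) (v : N) : ℤ :=
  bif b then (if tl a = v then 1 else 0) - (if hd a = v then 1 else 0) else 0

noncomputable def netOut (f : A → Bool) (v : N) : ℤ := ∑ a, arcNetOut tl hd (f a) a v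

def IsConservative (f : A → Bool) (s t : N) : Prop :=
  ∀ v, v ≠ s → v ≠ t → netOut tl hd f v = 0

variable {tl hd}

lemma netOut_update (f : A → Bool) (a : A) (b : Bool) (v : N) :
    netOut tl hd (Function.update f a b) v
      = netOut tl hd f v - arcNetOut tl hd (f a) a v + arcNetOut tl hd b a v := by
  unfold netOut
  rw [← Finset.add_sum_erase _ _ (Finset.mem_univ a),
    ← Finset.add_sum_erase _ _ (Finset.mem_univ a),
    Finset.sum_congr rfl fun x hx => by rw [Function.update_of_ne (Finset.ne_of_mem_erase hx)],
    Function.update_self]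
  ring

lemma netOut_flipAlong_resWalk {f : A → Bool} {u v : N}
    (p : DWalk (resTl tl hd f) (resHd tl hd f) u v) (hp : (p.arcs.map (·.1.1)).Nodup) (x : N) :
    netOut tl hd (flipAlong (p.arcs.map (·.1.1)) f) x
      = netOut tl hd f x + (if u = x then 1 else 0) - (if v = x then 1 else 0) := by
  induction p with
  | nil => simp [DWalk.arcs]
  | cons r h₁ h₂ p ih =>
    obtain ⟨⟨a, _ | _⟩, hab⟩ := r <;>
    simp only [resTl, resHd, cond_true, cond_false] at h₁ h₂ <;>
    subst h₁ h₂ <;>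
    simp only [DWalk.arcs, List.map_cons, List.nodup_cons] at hp ⊢ <;>
    rw [flipAlong_cons f hp.1, netOut_update, ih hp.2, flipAlong, if_neg hp.1, hab] <;>
    simp only [arcNetOut, cond_true, cond_false, Bool.not_true, Bool.not_false] <;>
    split_ifs <;> ring

lemma netOut_flipAlong_usedWalk {f : A → Bool} {u v : N} (q : DWalk tl hd u v)
    (hq : q.arcs.Nodup) (hused : ∀ a ∈ q.arcs, f a = true) (x : N) :
    netOut tl hd (flipAlong q.arcs f) x
      = netOut tl hd f x - (if u = x then 1 else 0) + (if v = x then 1 else 0) := by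
  induction q with
  | nil => simp [DWalk.arcs]
  | cons a h₁ h₂ q ih =>
    simp only [DWalk.arcs, List.nodup_cons, List.mem_cons, forall_eq_or_imp] at hq hused ⊢
    rw [flipAlong_cons f hq.1, netOut_update, ih hq.2 hused.2, flipAlong, if_neg hq.1, hused.1]
    subst h₁ h₂
    simp only [arcNetOut, cond_true, cond_false, Bool.not_true]
    split_ifs <;> ring

lemma sum_netOut (f : A → Bool) (R : Finset N) :
    ∑ v ∈ R, netOut tl hd f v = (#{a | f a = true ∧ tl a ∈ R ∧ hd a ∉ R} : ℤ)
      - #{a | f a = true ∧ hd a ∈ R ∧ tl a ∉ R} := by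
  rw [Finset.natCast_card_filter, Finset.natCast_card_filter, ← Finset.sum_sub_distrib]
  unfold netOut
  rw [Finset.sum_comm]
  refine Finset.sum_congr rfl fun a _ => ?_
  cases f a
  · simp [arcNetOut]
  · simp only [arcNetOut, cond_true, true_and, Finset.sum_sub_distrib, Finset.sum_ite_eq]
    split_ifs <;> simp_all

lemma netOut_eq_card_sub_card {f : A → Bool} {s t : N} (hf : IsConservative tl hd f s t)
    {R : Finset N} (hs : s ∈ R) (ht : t ∉ R) :
    netOut tl hd f s = (#{a | f a = true ∧ tl a ∈ R ∧ hd a ∉ R} : ℤ)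
      - #{a | f a = true ∧ hd a ∈ R ∧ tl a ∉ R} := by
  rw [← sum_netOut, Finset.sum_eq_single_of_mem s hs fun v hv hvs =>
    hf v hvs (by rintro rfl; exact ht hv)]

/-- Max-flow min-cut for unit capacities: a flow of maximal value admits no augmenting walk,
so the vertices reachable from `s` in its residual network form a cut saturated by it. -/
theorem exists_conservative_le_netOut [Fintype N] {s t : N} (hst : s ≠ t) {k : ℕ}
    (hcut : ∀ S : Finset N, s ∈ S → t ∉ S → k ≤ #{a | tl a ∈ S ∧ hd a ∉ S}) :
    ∃ f : A → Bool, IsConservative tl hd f s t ∧ (k : ℤ) ≤ netOut tl hd f s := by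
  obtain ⟨f, hf, hmax⟩ := Finset.exists_max_image {f : A → Bool | IsConservative tl hd f s t}
    (netOut tl hd · s)
    ⟨fun _ => false, Finset.mem_filter.mpr
      ⟨Finset.mem_univ _, fun v _ _ => by simp [netOut, arcNetOut]⟩⟩
  simp only [Finset.mem_filter, Finset.mem_univ, true_and] at hf hmax
  refine ⟨f, hf, ?_⟩
  by_cases hreach : Reach tl hd f s t
  · obtain ⟨p, -, hp⟩ := hreach.some.exists_nodup
    have hflip := netOut_flipAlong_resWalk p (ResArc.nodup_map_fst hp)
    have hcons : IsConservative tl hd (flipAlong (p.arcs.map (·.1.1)) f) s t :=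
      fun v hvs hvt => by
        rw [hflip, hf v hvs hvt, if_neg (Ne.symm hvs), if_neg (Ne.symm hvt)]; ring
    have := hmax _ hcons
    rw [hflip, if_pos rfl, if_neg hst.symm] at this
    linarith
  · let R : Finset N := {v | Reach tl hd f s v}
    have hsR : s ∈ R := by simpa [R] using ⟨.nil s⟩
    have htR : t ∉ R := by simpa [R] using hreach
    have hout :
        #{a | f a = true ∧ tl a ∈ R ∧ hd a ∉ R} = #{a | tl a ∈ R ∧ hd a ∉ R} := by
      congr 1
      ext a
      simp only [Finset.mem_filter, Finset.mem_univ, true_and, and_iff_right_iff_imp, R]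
      intro ⟨ha, hb⟩
      by_contra hfa
      exact hb (ha.snoc_unused (by simpa using hfa))
    have hin : #{a | f a = true ∧ hd a ∈ R ∧ tl a ∉ R} = 0 := by
      simp only [Finset.card_eq_zero, Finset.filter_eq_empty_iff, Finset.mem_univ, true_implies,
        not_and, not_not, R, Finset.mem_filter, true_and]
      exact fun a hfa ha => ha.snoc_used hfa
    rw [netOut_eq_card_sub_card hf hsR htR, hout, hin, Nat.cast_zero, sub_zero]
    exact_mod_cast hcut R hsR htR

/-- A flow of minimal support has no pair of used antiparallel arcs: cancelling such a pair
changes no net outflow. -/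
theorem exists_conservative_antiparallel_eq {s t : N} {k : ℤ} {f₀ : A → Bool}
    (hf₀ : IsConservative tl hd f₀ s t) (hk : k ≤ netOut tl hd f₀ s) :
    ∃ f, IsConservative tl hd f s t ∧ k ≤ netOut tl hd f s ∧
      ∀ a b, f a = true → f b = true → tl a = hd b → hd a = tl b → a = b := by
  obtain ⟨f, hf, hmin⟩ := Finset.exists_min_image
    {f | IsConservative tl hd f s t ∧ k ≤ netOut tl hd f s} (fun f => #{a | f a = true})
    ⟨f₀, by simp [hf₀, hk]⟩
  simp only [Finset.mem_filter, Finset.mem_univ, true_and] at hf hmin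
  refine ⟨f, hf.1, hf.2, fun a b ha hb hab hba => ?_⟩
  by_contra hne
  let g := Function.update (Function.update f a false) b false
  have hg : ∀ v, netOut tl hd g v = netOut tl hd f v := fun v => by
    simp only [g, netOut_update, Function.update_of_ne (Ne.symm hne), ha, hb, arcNetOut,
      cond_true, cond_false, hab, hba]
    ring
  have hsub : ({x | g x = true} : Finset A) ⊂ ({x | f x = true} : Finset A) := by
    refine Finset.ssubset_iff_of_subset (fun x => ?_) |>.mpr ⟨a, by simpa using ha, ?_⟩
    · simp only [Finset.mem_filter, Finset.mem_univ, true_and, g, Function.update_apply]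
      split_ifs <;> simp
    · simp [g, Function.update_of_ne hne]
  have := hmin g ⟨fun v hvs hvt => (hg v).trans (hf.1 v hvs hvt), (hg s).symm ▸ hf.2⟩
  exact absurd (Finset.card_lt_card hsub) (not_lt.mpr this)

lemma exists_usedWalk_of_pos [Fintype N] {f : A → Bool} {s t : N}
    (hf : IsConservative tl hd f s t) (hpos : 0 < netOut tl hd f s) :
    ∃ p : DWalk tl hd s t, ∀ a ∈ p.arcs, f a = true := by
  by_contra hnone
  let R : Finset N := {v | ∃ p : DWalk tl hd s v, ∀ a ∈ p.arcs, f a = true}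
  have hsR : s ∈ R := by simpa [R] using ⟨.nil s, by simp [DWalk.arcs]⟩
  have htR : t ∉ R := by simpa [R] using hnone
  have hout : #{a | f a = true ∧ tl a ∈ R ∧ hd a ∉ R} = 0 := by
    simp only [Finset.card_eq_zero, Finset.filter_eq_empty_iff, Finset.mem_univ, true_implies,
      not_and, not_not, R, Finset.mem_filter, true_and]
    rintro a hfa ⟨p, hp⟩
    refine ⟨p.snoc a rfl, fun x hx => ?_⟩
    rcases List.mem_append.mp (p.arcs_snoc a rfl ▸ hx) with hx | hx
    · exact hp x hx
    · rwa [List.mem_singleton.mp hx]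
  rw [netOut_eq_card_sub_card hf hsR htR, hout, Nat.cast_zero] at hpos
  omega

theorem exists_usedWalks [Fintype N] {s t : N} (hst : s ≠ t) (k : ℕ) :
    ∀ f : A → Bool, IsConservative tl hd f s t → (k : ℤ) ≤ netOut tl hd f s →
    ∃ L : List (DWalk tl hd s t), L.length = k ∧
      (∀ p ∈ L, p.arcs.Nodup ∧ ∀ a ∈ p.arcs, f a = true) ∧
      L.Pairwise (fun p q => ∀ a ∈ p.arcs, a ∉ q.arcs) := by
  induction k with
  | zero => exact fun _ _ _ => ⟨[], rfl, by simp, by simp⟩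
  | succ k ih =>
    intro f hf hk
    obtain ⟨p, hp⟩ := exists_usedWalk_of_pos hf (by omega)
    obtain ⟨q, hqp, hq⟩ := p.exists_nodup
    have hqused : ∀ a ∈ q.arcs, f a = true := fun a ha => hp a (hqp a ha)
    have hrem := netOut_flipAlong_usedWalk q hq hqused
    obtain ⟨L, hlen, hL, hpair⟩ := ih (flipAlong q.arcs f)
      (fun v hvs hvt => by
        rw [hrem, hf v hvs hvt, if_neg (Ne.symm hvs), if_neg (Ne.symm hvt)]; ring)
      (by rw [hrem, if_pos rfl, if_neg hst.symm]; push_cast at hk; linarith)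
    have hLq : ∀ r ∈ L, ∀ a ∈ r.arcs, f a = true ∧ a ∉ q.arcs := fun r hr a ha => by
      have := (hL r hr).2 a ha
      by_cases haq : a ∈ q.arcs
      · simp [flipAlong, haq, hqused a haq] at this
      · simpa [flipAlong, haq] using this
    refine ⟨q :: L, by simp [hlen], ?_, ?_⟩
    · rintro r (_ | ⟨_, hr⟩)
      · exact ⟨hq, hqused⟩
      · exact ⟨(hL r hr).1, fun a ha => (hLq r hr a ha).1⟩
    · exact hpair.cons fun r hr a haq har => (hLq r hr a har).2 haq

/-- Menger's theorem for arc-disjoint trails, with no two antiparallel arcs used. -/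
theorem exists_arcDisjoint_dwalks [Fintype N] {s t : N} (hst : s ≠ t) {k : ℕ}
    (hcut : ∀ S : Finset N, s ∈ S → t ∉ S → k ≤ #{a | tl a ∈ S ∧ hd a ∉ S}) :
    ∃ P : Fin k → DWalk tl hd s t, (∀ i, (P i).arcs.Nodup) ∧
      (∀ i j, i ≠ j → ∀ a ∈ (P i).arcs, a ∉ (P j).arcs) ∧
      ∀ i j, ∀ a ∈ (P i).arcs, ∀ b ∈ (P j).arcs,
        tl a = hd b → hd a = tl b → a = b := by
  obtain ⟨f₀, hf₀, hk₀⟩ := exists_conservative_le_netOut hst hcut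
  obtain ⟨f, hf, hk, hanti⟩ := exists_conservative_antiparallel_eq hf₀ hk₀
  obtain ⟨L, rfl, hL, hpair⟩ := exists_usedWalks hst k f hf hk
  refine ⟨L.get, fun i => (hL _ (L.get_mem i)).1, fun i j hij => ?_,
    fun i j a ha b hb => hanti a b ((hL _ (L.get_mem i)).2 a ha) ((hL _ (L.get_mem j)).2 b hb)⟩
  rcases lt_or_gt_of_ne hij with h | h
  · exact List.pairwise_iff_get.mp hpair i j h
  · exact fun a hi hj => List.pairwise_iff_get.mp hpair j i h a hj hi

end UnitFlow

lemma List.Nodup.filterMap_of_injOn {α β : Type*} {l : List α} {f : α → Option β}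
    (hl : l.Nodup)
    (hf : ∀ a ∈ l, ∀ a' ∈ l, ∀ b, f a = some b → f a' = some b → a = a') :
    (l.filterMap f).Nodup := by
  rw [← List.attach_map_subtype_val l, List.filterMap_map]
  exact hl.attach.filterMap fun x y b hx hy => Subtype.ext (hf x.1 x.2 y.1 y.2 b hx hy)

namespace Multigraph

section Fan

open UnitFlow

variable {V E H : Type*} (G : Multigraph V E) (Z : Set V) (foot : H → V)

/-- The network in which `foot`-fans are routed: the traversals of edges of `G` that do not
enter `Z`, and one arc from a new source `none` to `foot h` for each `h`. -/
abbrev FanArc (H : Type*) := {p : E × Bool // G.headOf p ∉ Z} ⊕ H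

def fanTl : FanArc G Z H → Option V
  | .inl p => some (G.tailOf p.1)
  | .inr _ => none

def fanHd : FanArc G Z H → Option V
  | .inl p => some (G.headOf p.1)
  | .inr h => some (foot h)

def fanEdge : FanArc G Z H → Option E
  | .inl p => some p.1.1
  | .inr _ => none

variable {G Z foot}

lemma exists_walk_of_dwalk_some {x y : Option V} (p : DWalk (fanTl G Z) (fanHd G Z foot) x y) :
    ∀ u v, x = some u → y = some v → ∃ w : G.Walk u v,
      w.edges = p.arcs.filterMap (fanEdge G Z) ∧ (∀ a ∈ p.arcs, a.isLeft) ∧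
      ∀ z ∈ w.support, z = u ∨ z ∉ Z := by
  induction p with
  | nil =>
    rintro u v rfl ⟨⟩
    exact ⟨.nil u, rfl, by simp [DWalk.arcs], by simp [Walk.support]⟩
  | cons a h₁ h₂ p ih =>
    rintro u v rfl rfl
    rcases a with ⟨⟨e, _ | _⟩, he⟩ | h
    all_goals simp only [fanTl, fanHd, tailOf, headOf, cond_true, cond_false, Option.some.injEq,
      reduceCtorEq] at h₁ h₂
    all_goals
      obtain ⟨w, hw, hleft, hsupp⟩ := ih _ _ h₂.symm rfl
      subst h₁
      first
        | refine ⟨.cons' e rfl rfl w, ?_, ?_, ?_⟩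
        | refine ⟨.cons e rfl rfl w, ?_, ?_, ?_⟩
      · simp [Walk.edges, DWalk.arcs, fanEdge, hw]
      · simpa [DWalk.arcs] using hleft
      · simp only [Walk.support, List.mem_cons]
        rintro z (rfl | hz)
        · exact Or.inl rfl
        · exact Or.inr ((hsupp z hz).elim (· ▸ he) id)

lemma exists_inr_mem_arcs {c : V} (p : DWalk (fanTl G Z) (fanHd G Z foot) none (some c)) :
    ∃ h, Sum.inr h ∈ p.arcs := by
  rcases p with _ | ⟨⟨_, _⟩ | h, h₁, -, -⟩
  · simp [fanTl] at h₁
  · exact ⟨h, List.mem_cons_self⟩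

lemma exists_walk_of_inr_mem_arcs {c : V} (p : DWalk (fanTl G Z) (fanHd G Z foot) none (some c))
    {h : H} (hh : Sum.inr h ∈ p.arcs) : ∃ w : G.Walk (foot h) c,
      w.edges = p.arcs.filterMap (fanEdge G Z) ∧ ∀ z ∈ w.support, z = foot h ∨ z ∉ Z := by
  rcases p with _ | ⟨⟨_, _⟩ | h₀, h₁, h₂, p⟩
  · simp [fanTl] at h₁
  obtain ⟨w, hw, hleft, hsupp⟩ := exists_walk_of_dwalk_some p _ _ h₂.symm rfl
  obtain rfl : h = h₀ := by
    rcases List.mem_cons.mp hh with hh | hh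
    · exact Sum.inr_injective hh
    · simpa using hleft _ hh
  exact ⟨w, hw, hsupp⟩

lemma fanEdge_eq_some {a b : FanArc G Z H} {e : E} (ha : fanEdge G Z a = some e)
    (hb : fanEdge G Z b = some e) :
    a = b ∨ fanTl G Z a = fanHd G Z foot b ∧ fanHd G Z foot a = fanTl G Z b := by
  rcases a with ⟨⟨e₁, _ | _⟩, h₁⟩ | _ <;>
    rcases b with ⟨⟨e₂, _ | _⟩, h₂⟩ | _ <;>
    simp only [fanEdge, Option.some.injEq, reduceCtorEq] at ha hb <;> subst ha hb <;>
    first | exact Or.inl rfl | exact Or.inr ⟨rfl, rfl⟩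

lemma card_le_card_fanCut [Fintype E] [Fintype H] {c : V}
    (hcut : ∀ S : Set V, c ∉ S → (∃ h, foot h ∈ S) →
      Fintype.card H ≤ #(G.exitsAvoiding S Z))
    {S : Finset (Option V)} (hs : none ∈ S) (hc : some c ∉ S) :
    Fintype.card H ≤ #{a | fanTl G Z a ∈ S ∧ fanHd G Z foot a ∉ S} := by
  by_cases hfoot : ∃ h, some (foot h) ∈ S
  · obtain ⟨h₀, hh₀⟩ := hfoot
    refine (hcut {v | some v ∈ S} hc ⟨h₀, hh₀⟩).trans (Finset.card_le_card_of_injOn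
      (fun p => if hp : G.headOf p ∉ Z then Sum.inl ⟨p, hp⟩ else Sum.inr h₀) ?_ ?_)
    · intro p hp
      simp only [exitsAvoiding, Finset.coe_filter, Finset.mem_univ, true_and,
        Set.mem_ofPred_eq] at hp
      dsimp only
      rw [dif_pos hp.2.2]
      exact Finset.mem_coe.mpr (Finset.mem_filter.mpr ⟨Finset.mem_univ _, hp.1, hp.2.1⟩)
    · intro p hp q hq hpq
      simp only [exitsAvoiding, Finset.coe_filter, Finset.mem_univ, true_and,
        Set.mem_ofPred_eq] at hp hq
      simpa [dif_pos hp.2.2, dif_pos hq.2.2] using hpq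
  · simp only [not_exists] at hfoot
    refine (Finset.card_le_card_of_injOn Sum.inr (fun h _ => ?_) Sum.inr_injective.injOn).trans'
      (Finset.card_univ (α := H)).ge
    exact Finset.mem_filter.mpr ⟨Finset.mem_univ _, hs, hfoot h⟩

theorem exists_fan [Fintype V] [Fintype E] [Fintype H] (c : V)
    (hcut : ∀ S : Set V, c ∉ S → (∃ h, foot h ∈ S) →
      Fintype.card H ≤ #(G.exitsAvoiding S Z)) :
    ∃ P : ∀ h, G.Walk (foot h) c, (∀ h, (P h).edges.Nodup) ∧
      (∀ h h', h ≠ h' → ∀ e ∈ (P h).edges, e ∉ (P h').edges) ∧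
      ∀ h, ∀ v ∈ (P h).support, v = foot h ∨ v ∉ Z := by
  obtain ⟨D, hDnodup, hDdisj, hDanti⟩ := exists_arcDisjoint_dwalks (tl := fanTl G Z)
    (hd := fanHd G Z foot) (by simp : (none : Option V) ≠ some c)
    fun S hs hc => card_le_card_fanCut hcut hs hc
  choose φ hφ using fun i => exists_inr_mem_arcs (D i)
  have hφ_inj : Function.Injective φ := fun i j hij => by
    by_contra hne
    exact hDdisj i j hne _ (hφ i) (hij ▸ hφ j)
  let σ := (Equiv.ofBijective φ ((Fintype.bijective_iff_injective_and_card φ).mpr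
    ⟨hφ_inj, Fintype.card_fin _⟩)).symm
  have hσ : ∀ h, Sum.inr h ∈ (D (σ h)).arcs := fun h => by
    have := hφ (σ h)
    rwa [Equiv.ofBijective_apply_symm_apply φ] at this
  choose P hPedges hPsupp using fun h => exists_walk_of_inr_mem_arcs (D (σ h)) (hσ h)
  have hedge : ∀ i j, ∀ a ∈ (D i).arcs, ∀ b ∈ (D j).arcs, ∀ e,
      fanEdge G Z a = some e → fanEdge G Z b = some e → a = b := fun i j a ha b hb e hae hbe =>
    (fanEdge_eq_some hae hbe).elim id fun h => hDanti i j a ha b hb h.1 h.2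
  refine ⟨P, fun h => ?_, fun h h' hne e he he' => ?_, hPsupp⟩
  · rw [hPedges]
    exact (hDnodup _).filterMap_of_injOn fun a ha b hb e => hedge _ _ a ha b hb e
  · rw [hPedges, List.mem_filterMap] at he he'
    obtain ⟨a, ha, hae⟩ := he
    obtain ⟨b, hb, hbe⟩ := he'
    obtain rfl := hedge _ _ a ha b hb e hae hbe
    exact hDdisj _ _ (σ.injective.ne hne) a ha hb

end Fan

variable {V E : Type*} {G : Multigraph V E}

lemma leaves_subset_of_auxGraph {W : Set V} {m : ℕ} (T : (G.auxGraph W m).Subgraph) :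
    T.leaves ⊆ W := by
  rintro v ⟨-, hv⟩
  obtain ⟨y, hy⟩ := Set.ncard_eq_one.mp hv
  have hvy : T.Adj v y := show y ∈ T.neighborSet v from hy ▸ Set.mem_singleton y
  exact (auxAdj_of_auxGraph_adj (T.adj_sub hvy)).1

lemma le_card_exitsAvoiding [Fintype E] {W : Set V} {m : ℕ}
    {T : (G.auxGraph W m).Subgraph} (hT : T.coe.Connected) {c z : V} (hc : c ∈ T.verts)
    (hcl : c ∉ T.leaves) (hz : z ∈ T.leaves) {S : Set V} (hzS : z ∈ S) (hcS : c ∉ S) :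
    m ≤ #(G.exitsAvoiding S T.leaves) := by
  obtain ⟨x, y, hxy, hxS, hyS, hleaf⟩ :=
    T.exists_adj_mem_notMem_of_connected hT hz.1 hc hcl hzS hcS
  obtain ⟨-, -, P, -, hdisj, hW⟩ := auxAdj_of_auxGraph_adj (T.adj_sub hxy)
  choose q hqP hqS hqS' hqP' using fun i => (P i).exists_crossing hxS hyS
  have hq_inj : Function.Injective q := fun i j hij => by
    by_contra hne
    exact hdisj i j hne _ (hqP i) (hij ▸ hqP j)
  have hmem : ∀ i, q i ∈ G.exitsAvoiding S T.leaves := by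
    refine fun i => Finset.mem_filter.mpr
      ⟨Finset.mem_univ _, hqS i, hqS' i, fun hl => hqS' i ?_⟩
    rw [hleaf _ (hW i _ (hqP' i) (leaves_subset_of_auxGraph T hl)) hl]
    exact hzS
  simpa using Finset.card_le_card_of_injOn q (s := Finset.univ) (fun i _ => hmem i) hq_inj.injOn

theorem strongImmersion_of_walks {V' E' : Type*} {F : Multigraph V' E'} {θ : V' → V}
    (hθ : Function.Injective θ) {Z : Set V} (hθZ : ∀ u, θ u ∈ Z) {c : V}
    (P : ∀ p : E' × Bool, G.Walk (θ (F.tailOf p)) c) (hnodup : ∀ p, (P p).edges.Nodup)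
    (hdisj : ∀ p q, p ≠ q → ∀ e ∈ (P p).edges, e ∉ (P q).edges)
    (hsupp : ∀ p, ∀ v ∈ (P p).support, v = θ (F.tailOf p) ∨ v ∉ Z) :
    F.StrongImmersion G := by
  -- `θ (F.tailOf (e, false))` is `θ (F.tgt e)` only up to unfolding, so `rw` cannot see
  -- through `Q`; its edges and support are computed once, by `exact`.
  let Q e : G.Walk (θ (F.src e)) (θ (F.tgt e)) := (P (e, true)).append (P (e, false)).reverse
  have hQ_edges e : (Q e).edges = (P (e, true)).edges ++ (P (e, false)).edges.reverse := by
    rw [← Walk.edges_reverse]; exact Walk.edges_append _ _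
  have hQ_support e {v} (hv : v ∈ (Q e).support) :
      v ∈ (P (e, true)).support ∨ v ∈ (P (e, false)).support :=
    (Walk.mem_support_append hv).imp id fun h => List.mem_reverse.mp (Walk.support_reverse _ ▸ h)
  refine ⟨⟨θ, hθ, Q, fun e => ?_, fun e e' hne x hx hx' => ?_, fun e u hus hut hu => ?_⟩⟩
  · rw [hQ_edges]
    exact (hnodup _).append (List.nodup_reverse.mpr (hnodup _))
      fun x hx hx' => hdisj _ _ (by simp) x hx (List.mem_reverse.mp hx')
  · simp only [hQ_edges, List.mem_append, List.mem_reverse] at hx hx'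
    have hne' : ∀ b b' : Bool, (e, b) ≠ (e', b') := fun b b' h => hne (congrArg Prod.fst h)
    rcases hx with hx | hx <;> rcases hx' with hx' | hx' <;> exact hdisj _ _ (hne' _ _) x hx hx'
  · rcases hQ_support e hu with hu | hu
    · exact (hsupp _ _ hu).elim (fun h => hus (hθ h)) (· (hθZ u))
    · exact (hsupp _ _ hu).elim (fun h => hut (hθ h)) (· (hθZ u))

end Multigraph

theorem strongImmersion_of_auxGraph_star_general {V E V' E' : Type*} [Fintype V] [Fintype E]
    [Fintype V'] [Fintype E']
    (G : Multigraph V E) (F : Multigraph V' E') (W : Set V) (m : ℕ)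
    (hm : 2 * Fintype.card E' ≤ m)
    (T : (G.auxGraph W m).Subgraph) (c : V) (htree : T.coe.IsTree)
    (hc : c ∈ T.verts) (hcdeg : 2 ≤ (T.neighborSet c).ncard)
    (hZ : {v | v ∈ T.verts ∧ (T.neighborSet v).ncard = 1}.ncard = Fintype.card V') :
    Multigraph.StrongImmersion F G := by
  have hcl : c ∉ T.leaves := fun h => by rw [h.2] at hcdeg; omega
  obtain ⟨θ⟩ : Nonempty (V' ≃ T.leaves) :=
    Finite.card_eq.mp (by rw [Nat.card_eq_fintype_card, Nat.card_coe_set_eq]; exact hZ.symm)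
  have hθ : Function.Injective (fun u => (θ u : V)) := Subtype.val_injective.comp θ.injective
  obtain ⟨P, hnodup, hdisj, hsupp⟩ :=
    G.exists_fan (Z := T.leaves) (foot := fun p => (θ (F.tailOf p) : V)) c
      fun S hcS ⟨_, hp⟩ => by
        rw [Fintype.card_prod, Fintype.card_bool, mul_comm]
        exact hm.trans
          (Multigraph.le_card_exitsAvoiding htree.connected hc hcl (θ _).2 hp hcS)
  exact Multigraph.strongImmersion_of_walks hθ (fun u => (θ u).2) P hnodup hdisj hsupp

/-- if `G(m,W)` contains a subtree with a non-leaf hub `c` and exactly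
`|V(F)|` leaves, where `|V(F)| ≥ 2` and `m ≥ 2|E(F)|`, then `G` strongly immerses `F`. -/
theorem strongImmersion_of_auxGraph_star {V E V' E' : Type*} [Fintype V] [Fintype E]
    [Fintype V'] [Fintype E']
    (G : Multigraph V E) (F : Multigraph V' E') (W : Set V) (m : ℕ)
    (hVF : 2 ≤ Fintype.card V') (hm : 2 * Fintype.card E' ≤ m)
    (T : (G.auxGraph W m).Subgraph) (c : V) (htree : T.coe.IsTree)
    (hc : c ∈ T.verts) (hcdeg : 2 ≤ (T.neighborSet c).ncard)
    (hZ : {v | v ∈ T.verts ∧ (T.neighborSet v).ncard = 1}.ncard = Fintype.card V') :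
    Multigraph.StrongImmersion F G :=
  strongImmersion_of_auxGraph_star_general G F W m hm T c htree hc hcdeg hZ
end

section
/- Let G be a graph with a path-like decomposition P of G−A with respect to W∖A, for some A ⊆ W, such that the neighborhood of every vertex of A is p-bounded in P and |W∖A| = m ≥ 2|A|p + 1. Then there exists an index 1 ≤ i ≤ m such that no vertex of A has a neighbor in {x_i} ∪ B_{i−1} ∪ B_i, where x₁,...,x_m is the ordering and B₀,...,B_m the bags of P. -/
open scoped Classical

/-! Each vertex of `A` sees at most `p` ordered vertices and `p` bags, and every bag `B_j` lies in
only the two triples `({x_j}, B_{j-1}, B_j)` and `({x_{j+1}}, B_j, B_{j+1})`, so each vertex of `A`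
meets at most `2p` of the `m` triples. As `m > |A| · 2p`, some triple is met by no vertex of `A`. -/

lemma Set.exists_forall_notMem_of_ncard_mul_lt {ι α : Type*} [Finite α] {t : Set ι}
    (ht : t.Finite) (s : ι → Set α) {k : ℕ} (hs : ∀ i ∈ t, (s i).ncard ≤ k)
    (hcard : t.ncard * k < Nat.card α) : ∃ a, ∀ i ∈ t, a ∉ s i := by
  have hunion : (⋃ i ∈ t, s i).ncard < Nat.card α :=
    calc (⋃ i ∈ t, s i).ncard ≤ ∑ i ∈ ht.toFinset, (s i).ncard := by
          simpa using ht.toFinset.set_ncard_biUnion_le s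
      _ ≤ ht.toFinset.card * k := Finset.sum_le_card_nsmul _ _ _ (by simpa using hs)
      _ < Nat.card α := by rwa [← Set.ncard_eq_toFinset_card t ht]
  obtain ⟨a, ha⟩ := (Set.ne_univ_iff_exists_notMem (⋃ i ∈ t, s i)).1 fun h =>
    hunion.ne (by rw [h, Set.ncard_univ])
  exact ⟨a, fun i hi has => ha (Set.mem_biUnion hi has)⟩

lemma Set.ncard_preimage_le_of_injective {α β : Type*} {f : α → β} (hf : f.Injective)
    {s : Set β} (hs : s.Finite) : (f ⁻¹' s).ncard ≤ s.ncard :=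
  Set.ncard_le_ncard_of_injOn f (fun _ ha => ha) hf.injOn hs

namespace Multigraph.PathLikeDecomp

variable {V E : Type*} {G : Multigraph V E} {S X : Set V} (P : PathLikeDecomp G S X)

def bagsMeeting (Z : Set V) : Set (Fin (P.t + 1)) := {j | (P.bag j ∩ Z).Nonempty}

/-- Indices are 0-based: the triple `({x_{i+1}}, B_i, B_{i+1})` of the paper is
`({P.ord i}, P.bag i.castSucc, P.bag i.succ)`. -/
def indicesMeeting (Z : Set V) : Set (Fin P.t) :=
  P.ord ⁻¹' Z ∪ (Fin.castSucc ⁻¹' P.bagsMeeting Z ∪ Fin.succ ⁻¹' P.bagsMeeting Z)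

lemma ncard_ord_preimage_le (Z : Set V) : (P.ord ⁻¹' Z).ncard ≤ (X ∩ Z).ncard := by
  have hX : X.Finite := P.ord_range ▸ Set.finite_range P.ord
  rw [← Set.preimage_range_inter, P.ord_range]
  exact Set.ncard_preimage_le_of_injective P.ord_inj (hX.inter_of_left Z)

lemma ncard_indicesMeeting_le {p : ℕ} {Z : Set V} (hZ : P.Bounded p Z) :
    (P.indicesMeeting Z).ncard ≤ 2 * p := by
  have hbags : ∀ {f : Fin P.t → Fin (P.t + 1)}, f.Injective →
      (f ⁻¹' P.bagsMeeting Z).ncard ≤ (P.bagsMeeting Z).ncard :=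
    fun hf => Set.ncard_preimage_le_of_injective hf (Set.toFinite _)
  calc (P.indicesMeeting Z).ncard
      ≤ (P.ord ⁻¹' Z).ncard + ((Fin.castSucc ⁻¹' P.bagsMeeting Z).ncard
          + (Fin.succ ⁻¹' P.bagsMeeting Z).ncard) :=
        (Set.ncard_union_le _ _).trans (Nat.add_le_add_left (Set.ncard_union_le _ _) _)
    _ ≤ (X ∩ Z).ncard + ((P.bagsMeeting Z).ncard + (P.bagsMeeting Z).ncard) :=
        Nat.add_le_add (P.ncard_ord_preimage_le Z)
          (Nat.add_le_add (hbags (Fin.castSucc_injective _)) (hbags (Fin.succ_injective _)))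
    _ ≤ 2 * p := by unfold Bounded at hZ; unfold bagsMeeting; omega

end Multigraph.PathLikeDecomp

theorem exists_index_avoiding_A_neighbours_general {V E : Type*} [Fintype V]
    (G : Multigraph V E) (W A : Set V) (p : ℕ)
    (P : Multigraph.PathLikeDecomp G {v | v ∉ A} (W \ A))
    (hbd : ∀ v ∈ A, P.Bounded p (G.nbhd v))
    (hm : 2 * A.ncard * p + 1 ≤ P.t) :
    ∃ i : Fin P.t, ∀ v ∈ A, ∀ u ∈ G.nbhd v,
      u ≠ P.ord i ∧ u ∉ P.bag i.castSucc ∧ u ∉ P.bag i.succ := by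
  obtain ⟨i, hi⟩ := Set.exists_forall_notMem_of_ncard_mul_lt A.toFinite
    (fun v => P.indicesMeeting (G.nbhd v)) (fun v hv => P.ncard_indicesMeeting_le (hbd v hv))
    (by rw [Nat.card_fin]; linarith)
  refine ⟨i, fun v hv u hu => ⟨?_, ?_, ?_⟩⟩
  · exact fun h => hi v hv (Or.inl (show P.ord i ∈ G.nbhd v from h ▸ hu))
  · exact fun h => hi v hv (Or.inr (Or.inl ⟨u, h, hu⟩))
  · exact fun h => hi v hv (Or.inr (Or.inr ⟨u, h, hu⟩))

/-- pigeonhole for `p`-bounded neighbourhoods: if `|W ∖ A| ≥ 2|A|p + 1`, some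
index `i` has no vertex of `A` with a neighbour in `{x_i} ∪ B_{i−1} ∪ B_i`. -/
theorem exists_index_avoiding_A_neighbours {V E : Type*} [Fintype V] [Fintype E]
    (G : Multigraph V E) (W A : Set V) (p : ℕ) (hA : A ⊆ W)
    (P : Multigraph.PathLikeDecomp G {v | v ∉ A} (W \ A))
    (hbd : ∀ v ∈ A, P.Bounded p (G.nbhd v))
    (hm : 2 * A.ncard * p + 1 ≤ P.t) :
    ∃ i : Fin P.t, ∀ v ∈ A, ∀ u ∈ G.nbhd v,
      u ≠ P.ord i ∧ u ∉ P.bag i.castSucc ∧ u ∉ P.bag i.succ :=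
  exists_index_avoiding_A_neighbours_general G W A p P hbd hm
end
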